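/- arXiv:1605.02626 — 2 statements merged into one kernel-verified Lean document; each statement's English description precedes it below -/
import Mathlib

section
/- Let B(s,t) = (1-s)(1-t)a₁ + s(1-t)a₂ + st a₃ + (1-s)t a₄ be a bilinear quadrilateral patch in ℝ³, and consider the triangle in parameter space with vertices (0,0), (1,0), (0,1) (half of the unit square cut along the diagonal s+t=1). Then the restriction of B to this parameter triangle equals the image under the quadratic map F : T̂ → ℝ³ in (ℙ₂)³ determined by F(ŝ₁)=a₁, F(ŝ₂)=a₂, F(ŝ₃)=a₄, F at the midpoints of edges ŝ₁ŝ₂ and ŝ₁ŝ₃ equal to (a₁+a₂)/2 and (a₁+a₄)/2 respectively, and F at the midpoint of edge ŝ₂ŝ₃ equal to (a₁+a₂+a₃+a₄)/4, composed with the affine identification of T̂'s face with the parameter triangle. In particular, the image of the quadratic triangle exactly covers one half of the bilinear quad surface. -/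
/-- Bilinear parametrization of the quadrilateral with corners a₁, a₂, a₃, a₄. -/
noncomputable def bilinearPatch (a₁ a₂ a₃ a₄ : ℝ × ℝ × ℝ) (p : ℝ × ℝ) : ℝ × ℝ × ℝ :=
  ((1 - p.1) * (1 - p.2)) • a₁ + (p.1 * (1 - p.2)) • a₂ + (p.1 * p.2) • a₃
    + ((1 - p.1) * p.2) • a₄

/-- A function on ℝ² is a bivariate polynomial of total degree at most 2. -/
def IsQuad2 (f : ℝ × ℝ → ℝ) : Prop :=
  ∃ a₀ a₁ a₂ a₃ a₄ a₅ : ℝ, ∀ p : ℝ × ℝ,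
    f p = a₀ + a₁ * p.1 + a₂ * p.2 + a₃ * p.1 ^ 2 + a₄ * p.1 * p.2 + a₅ * p.2 ^ 2

/-- The reference (parameter) triangle: half of the unit square cut along s + t = 1. -/
def refTriangle : Set (ℝ × ℝ) := {p | 0 ≤ p.1 ∧ 0 ≤ p.2 ∧ p.1 + p.2 ≤ 1}


private lemma quad_key (f : ℝ × ℝ → ℝ) (b1 b2 b3 b4 : ℝ) (hf : IsQuad2 f)
    (h1 : f (0,0) = b1) (h2 : f (1,0) = b2) (h4 : f (0,1) = b4)
    (h12 : f (1/2,0) = (b1+b2)/2) (h13 : f (0,1/2) = (b1+b4)/2)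
    (h23 : f (1/2,1/2) = (b1+b2+b3+b4)/4) (p : ℝ × ℝ) :
    f p = (1-p.1)*(1-p.2)*b1 + p.1*(1-p.2)*b2 + p.1*p.2*b3 + (1-p.1)*p.2*b4 := by
  obtain ⟨a0,a1,a2,a3,a4,a5,hq⟩ := hf
  rw [hq] at h1 h2 h4 h12 h13 h23
  norm_num at h1 h2 h4 h12 h13 h23
  have ha0 : a0 = b1 := by linarith
  have ha3 : a3 = 0 := by linarith
  have ha5 : a5 = 0 := by linarith
  have ha1 : a1 = b2 - b1 := by linarith
  have ha2 : a2 = b4 - b1 := by linarith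
  have ha4 : a4 = b1 - b2 + b3 - b4 := by linarith
  rw [hq p]
  linear_combination ha0 + ha1*p.1 + ha2*p.2 + ha3*p.1^2 + ha4*(p.1*p.2) + ha5*p.2^2

/-- Proposition 1 of the paper (non-conforming hexahedron–tetrahedra junction):
the quadratic triangle determined by the junction conditions coincides with the
bilinear quad patch on half of the parameter square. -/
theorem quadratic_triangle_matches_half_bilinear_quad
    (a₁ a₂ a₃ a₄ : ℝ × ℝ × ℝ) (F : ℝ × ℝ → ℝ × ℝ × ℝ)
    (hF1 : IsQuad2 fun p => (F p).1)
    (hF2 : IsQuad2 fun p => (F p).2.1)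
    (hF3 : IsQuad2 fun p => (F p).2.2)
    (hv1 : F (0, 0) = a₁) (hv2 : F (1, 0) = a₂) (hv3 : F (0, 1) = a₄)
    (hm12 : F (1/2, 0) = (1/2 : ℝ) • (a₁ + a₂))
    (hm13 : F (0, 1/2) = (1/2 : ℝ) • (a₁ + a₄))
    (hm23 : F (1/2, 1/2) = (1/4 : ℝ) • (a₁ + a₂ + a₃ + a₄)) :
    (∀ p ∈ refTriangle, F p = bilinearPatch a₁ a₂ a₃ a₄ p) ∧
    F '' refTriangle = bilinearPatch a₁ a₂ a₃ a₄ '' refTriangle := by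
  have main : ∀ p : ℝ × ℝ, F p = bilinearPatch a₁ a₂ a₃ a₄ p := by
    intro p
    have c1 := quad_key (fun p => (F p).1) a₁.1 a₂.1 a₃.1 a₄.1 hF1
      (show (F (0,0)).1 = _ by rw [hv1]) (show (F (1,0)).1 = _ by rw [hv2])
      (show (F (0,1)).1 = _ by rw [hv3])
      (show (F (1/2,0)).1 = _ by rw [hm12]; simp [Prod.smul_def]; ring)
      (show (F (0,1/2)).1 = _ by rw [hm13]; simp [Prod.smul_def]; ring)
      (show (F (1/2,1/2)).1 = _ by rw [hm23]; simp [Prod.smul_def]; ring) p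
    have c2 := quad_key (fun p => (F p).2.1) a₁.2.1 a₂.2.1 a₃.2.1 a₄.2.1 hF2
      (show (F (0,0)).2.1 = _ by rw [hv1]) (show (F (1,0)).2.1 = _ by rw [hv2])
      (show (F (0,1)).2.1 = _ by rw [hv3])
      (show (F (1/2,0)).2.1 = _ by rw [hm12]; simp [Prod.smul_def]; ring)
      (show (F (0,1/2)).2.1 = _ by rw [hm13]; simp [Prod.smul_def]; ring)
      (show (F (1/2,1/2)).2.1 = _ by rw [hm23]; simp [Prod.smul_def]; ring) p
    have c3 := quad_key (fun p => (F p).2.2) a₁.2.2 a₂.2.2 a₃.2.2 a₄.2.2 hF3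
      (show (F (0,0)).2.2 = _ by rw [hv1]) (show (F (1,0)).2.2 = _ by rw [hv2])
      (show (F (0,1)).2.2 = _ by rw [hv3])
      (show (F (1/2,0)).2.2 = _ by rw [hm12]; simp [Prod.smul_def]; ring)
      (show (F (0,1/2)).2.2 = _ by rw [hm13]; simp [Prod.smul_def]; ring)
      (show (F (1/2,1/2)).2.2 = _ by rw [hm23]; simp [Prod.smul_def]; ring) p
    ext
    · simpa [bilinearPatch, Prod.smul_def] using c1
    · simpa [bilinearPatch, Prod.smul_def] using c2
    · simpa [bilinearPatch, Prod.smul_def] using c3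
  exact ⟨fun p _ => main p, Set.image_congr (fun p _ => main p)⟩
end

section
/- Let f_Q = f̂_Q ∘ F_Q⁻¹ with f̂_Q ∈ ℚ₁, restricted to a bilinear face of the hexahedron Q with corners a₁,a₂,a₃,a₄, and let f_T = f̂_T ∘ F_T⁻¹ with f̂_T ∈ ℙ₂ restricted to a quadratically-mapped triangular face of the tetrahedron T whose geometry coincides with the half-quad bounded by edges a₁a₂, a₂a₄-diagonal, a₄a₁. If f̂_T and f̂_Q agree at the common vertices a₁,a₂,a₄ (in reference coordinates), f̂_T at edge midpoints of a₁a₂ and a₁a₄ equals f̂_Q's bilinear-restriction values at those reference points, and f̂_T at the midpoint of the reference edge corresponding to the diagonal equals f̂_Q evaluated at the center of the reference quadrilateral face, then f_T = f_Q on the whole common triangular surface. -/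
/-- A function on ℝ³ is a trilinear polynomial (degree ≤ 1 in each variable). -/
def IsQ1 (f : ℝ → ℝ → ℝ → ℝ) : Prop :=
  ∃ c₀ c₁ c₂ c₃ c₄ c₅ c₆ c₇ : ℝ, ∀ x y z : ℝ,
    f x y z = c₀ + c₁ * x + c₂ * y + c₃ * z
      + c₄ * x * y + c₅ * x * z + c₆ * y * z + c₇ * x * y * z

/-- A function on ℝ³ is a trivariate polynomial of total degree at most 2. -/
def IsP2 (f : ℝ → ℝ → ℝ → ℝ) : Prop :=
  ∃ c₀ c₁ c₂ c₃ c₄ c₅ c₆ c₇ c₈ c₉ : ℝ, ∀ x y z : ℝ,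
    f x y z = c₀ + c₁ * x + c₂ * y + c₃ * z
      + c₄ * x ^ 2 + c₅ * y ^ 2 + c₆ * z ^ 2
      + c₇ * x * y + c₈ * x * z + c₉ * y * z

/-- Proposition 2 of the paper (continuity of the function spaces at hybrid junctions).
The hexahedron face is parametrized (in reference coordinates) by `(s, t) ↦ FQ s t 0` and
the tetrahedron face by `(s, t) ↦ FT s t 0`, with the identification `(0,0) ↦ a₁`,
`(1,0) ↦ a₂`, `(0,1) ↦ a₄`, the diagonal a₂a₄ corresponding to the segment s + t = 1
and the reference quad-face center to `(1/2, 1/2)`.  The geometric junction conditions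
of Proposition 1 make the two parametrizations coincide on the parameter triangle
(hypothesis `hgeo`).  If `f̂_T ∈ ℙ₂` and `f̂_Q ∈ ℚ₁` agree at the three common vertices,
at the two common edge midpoints, and the value of `f̂_T` at the reference midpoint of the
diagonal edge equals the value of `f̂_Q` at the reference center of the quad face, then
`f_T = f̂_T ∘ F_T⁻¹` and `f_Q = f̂_Q ∘ F_Q⁻¹` agree on the whole common triangular surface,
i.e. the reference restrictions coincide at every parameter of the triangle. -/
theorem hybrid_junction_function_continuity
    (FQ FT : ℝ → ℝ → ℝ → ℝ × ℝ × ℝ)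
    (hFQ1 : IsQ1 fun x y z => (FQ x y z).1)
    (hFQ2 : IsQ1 fun x y z => (FQ x y z).2.1)
    (hFQ3 : IsQ1 fun x y z => (FQ x y z).2.2)
    (hFT1 : IsP2 fun x y z => (FT x y z).1)
    (hFT2 : IsP2 fun x y z => (FT x y z).2.1)
    (hFT3 : IsP2 fun x y z => (FT x y z).2.2)
    (hgeo : ∀ s t : ℝ, 0 ≤ s → 0 ≤ t → s + t ≤ 1 → FT s t 0 = FQ s t 0)
    (fQ fT : ℝ → ℝ → ℝ → ℝ) (hfQ : IsQ1 fQ) (hfT : IsP2 fT)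
    (hv1 : fT 0 0 0 = fQ 0 0 0)
    (hv2 : fT 1 0 0 = fQ 1 0 0)
    (hv4 : fT 0 1 0 = fQ 0 1 0)
    (hm12 : fT (1/2) 0 0 = fQ (1/2) 0 0)
    (hm14 : fT 0 (1/2) 0 = fQ 0 (1/2) 0)
    (hdiag : fT (1/2) (1/2) 0 = fQ (1/2) (1/2) 0) :
    ∀ s t : ℝ, 0 ≤ s → 0 ≤ t → s + t ≤ 1 → fT s t 0 = fQ s t 0 := by
  obtain ⟨q0, q1, q2, q3, q4, q5, q6, q7, hq⟩ := hfQ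
  obtain ⟨p0, p1, p2, p3, p4, p5, p6, p7, p8, p9, hp⟩ := hfT
  intro s t _ _ _
  simp only [hq, hp] at hv1 hv2 hv4 hm12 hm14 hdiag ⊢
  linear_combination (1 - 3*s - 3*t + 2*s^2 + 2*t^2 + 4*s*t) * hv1
    + (-s + 2*s^2) * hv2 + (4*s - 4*s^2 - 4*s*t) * hm12
    + (-t + 2*t^2) * hv4 + (4*t - 4*t^2 - 4*s*t) * hm14
    + (4*s*t) * hdiag
end
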